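/- arXiv:2402.12034 — 3 statements merged into one kernel-verified Lean document; each statement's English description precedes it below -/
import Mathlib

section
/- Let S be a finite nonempty set, P a column-stochastic matrix indexed by S, r : S → ℝ a reward vector with 0 ≤ r(s) ≤ 1 for all s, and let d_b and μ be probability vectors on S. For γ ∈ [0,1) define the value vector V_γ := ∑_{t=0}^{∞} γ^t (P^t)ᵀ r (so that ν · V_γ = ∑_{t=0}^{∞} γ^t (r · P^t ν) for any vector ν), and the normalized objectives J_{d_b}(γ) := (1−γ)·∑_s d_b(s) V_γ(s) and J_μ(γ) := (1−γ)·∑_s μ(s) V_γ(s). If there exists a natural number T such that P^t d_b = P^t μ for all t ≥ T (which holds when the chain is irreducible and aperiodic, by uniqueness of the stationary distribution), then J_{d_b}(γ) − J_μ(γ) tends to 0 as γ tends to 1 from the left. -/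
/-!
Only the differences `P^t (d_b - μ)` enter `J_{d_b}(γ) - J_μ(γ)`, and they vanish for `t ≥ T`.
Column-stochasticity makes the discounted series converge, so exchanging it with the pairing
against `d_b - μ` turns `J_{d_b}(γ) - J_μ(γ)` into `(1 - γ)` times a polynomial in `γ`,
which tends to `0` at `γ = 1`.
-/

open Matrix Filter Topology

theorem dotProduct_tsum {ι S : Type*} [Fintype S] {f : ι → S → ℝ} (hf : Summable f)
    (ν : S → ℝ) : ν ⬝ᵥ ∑' i, f i = ∑' i, ν ⬝ᵥ f i :=
  (hasSum_sum fun s _ => (Pi.hasSum.1 hf.hasSum s).mul_left (ν s)).tsum_eq.symm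

namespace Matrix

variable {n : Type*} [Fintype n] [DecidableEq n]

theorem norm_mulVec_le_of_mem_rowStochastic {M : Matrix n n ℝ} (hM : M ∈ rowStochastic ℝ n)
    (x : n → ℝ) : ‖M *ᵥ x‖ ≤ ‖x‖ := by
  refine (pi_norm_le_iff_of_nonneg (norm_nonneg x)).2 fun i => ?_
  calc ‖(M *ᵥ x) i‖ ≤ ∑ j, ‖M i j * x j‖ := norm_sum_le _ _
    _ ≤ ∑ j, M i j * ‖x‖ := Finset.sum_le_sum fun j _ => by
        rw [norm_mul, Real.norm_of_nonneg (nonneg_of_mem_rowStochastic hM)]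
        exact mul_le_mul_of_nonneg_left (norm_le_pi_norm x j) (nonneg_of_mem_rowStochastic hM)
    _ = ‖x‖ := by rw [← Finset.sum_mul, sum_row_of_mem_rowStochastic hM, one_mul]

theorem norm_pow_transpose_mulVec_le_of_mem_colStochastic {P : Matrix n n ℝ}
    (hP : P ∈ colStochastic ℝ n) (t : ℕ) (r : n → ℝ) : ‖(P ^ t)ᵀ *ᵥ r‖ ≤ ‖r‖ := by
  refine norm_mulVec_le_of_mem_rowStochastic ?_ r
  rw [transpose_pow]
  exact pow_mem (transpose_mem_rowStochastic_iff_mem_colStochastic.2 hP) t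

theorem summable_discounted_of_mem_colStochastic {P : Matrix n n ℝ}
    (hP : P ∈ colStochastic ℝ n) (r : n → ℝ) {γ : ℝ} (hγ : |γ| < 1) :
    Summable fun t : ℕ => γ ^ t • ((P ^ t)ᵀ *ᵥ r) := by
  refine Summable.of_norm_bounded ((summable_geometric_of_abs_lt_one hγ).abs.mul_right ‖r‖)
    fun t => ?_
  rw [norm_smul, Real.norm_eq_abs, abs_pow]
  exact mul_le_mul_of_nonneg_left (norm_pow_transpose_mulVec_le_of_mem_colStochastic hP t r)
    (by positivity)

theorem dotProduct_tsum_discounted_eq_sum_range {P : Matrix n n ℝ} {r ν : n → ℝ} {γ : ℝ}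
    (hsum : Summable fun t : ℕ => γ ^ t • ((P ^ t)ᵀ *ᵥ r)) {T : ℕ}
    (hT : ∀ t, T ≤ t → P ^ t *ᵥ ν = 0) :
    ν ⬝ᵥ ∑' t : ℕ, γ ^ t • ((P ^ t)ᵀ *ᵥ r) =
      ∑ t ∈ Finset.range T, γ ^ t * (P ^ t *ᵥ ν ⬝ᵥ r) := by
  have hterm : ∀ t : ℕ, ν ⬝ᵥ γ ^ t • ((P ^ t)ᵀ *ᵥ r) = γ ^ t * (P ^ t *ᵥ ν ⬝ᵥ r) := fun t => by
    rw [dotProduct_smul, dotProduct_mulVec, vecMul_transpose, smul_eq_mul]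
  rw [dotProduct_tsum hsum, tsum_congr hterm]
  refine tsum_eq_sum fun t ht => ?_
  rw [hT t (by simpa using ht), zero_dotProduct, mul_zero]

end Matrix

theorem stmt_3_general {S : Type*} [Fintype S] [DecidableEq S]
    (P : Matrix S S ℝ)
    (hP_nonneg : ∀ s' s, 0 ≤ P s' s)
    (hP_col : ∀ s, ∑ s', P s' s = 1)
    (r : S → ℝ)
    (db μ : S → ℝ)
    (hT : ∃ T : ℕ, ∀ t, T ≤ t → (P ^ t) *ᵥ db = (P ^ t) *ᵥ μ) :
    Tendsto (fun γ : ℝ =>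
        (1 - γ) * (∑ s, db s * (∑' t : ℕ, γ ^ t • ((P ^ t)ᵀ *ᵥ r)) s) -
        (1 - γ) * (∑ s, μ s * (∑' t : ℕ, γ ^ t • ((P ^ t)ᵀ *ᵥ r)) s))
      (nhdsWithin 1 (Set.Ico (0 : ℝ) 1)) (nhds 0) := by
  obtain ⟨T, hT⟩ := hT
  have hP : P ∈ colStochastic ℝ S := mem_colStochastic_iff_sum.2 ⟨hP_nonneg, hP_col⟩
  have hdiff : ∀ t, T ≤ t → P ^ t *ᵥ (db - μ) = 0 := fun t ht => by
    rw [mulVec_sub, hT t ht, sub_self]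
  have hcont : Continuous fun γ : ℝ =>
      (1 - γ) * ∑ t ∈ Finset.range T, γ ^ t * (P ^ t *ᵥ (db - μ) ⬝ᵥ r) := by fun_prop
  have hpoly := (hcont.tendsto 1).mono_left (nhdsWithin_le_nhds (s := Set.Ico (0 : ℝ) 1))
  rw [sub_self, zero_mul] at hpoly
  refine hpoly.congr' ?_
  filter_upwards [self_mem_nhdsWithin] with γ ⟨hγ0, hγ1⟩
  have hsum := summable_discounted_of_mem_colStochastic hP r (γ := γ) (by rwa [abs_of_nonneg hγ0])
  change _ = (1 - γ) * (db ⬝ᵥ _) - (1 - γ) * (μ ⬝ᵥ _)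
  rw [← mul_sub, ← sub_dotProduct, dotProduct_tsum_discounted_eq_sum_range hsum hdiff]

/-- Theorem 1 of the paper: For a finite-state column-stochastic
matrix `P`, a reward vector `r` with values in `[0,1]`, and probability vectors
`d_b` and `μ`, define for `γ ∈ [0,1)` the value vector
`V_γ = ∑_t γ^t (P^t)ᵀ r` and the normalized objectives
`J_{d_b}(γ) = (1−γ)·∑_s d_b(s) V_γ(s)` and `J_μ(γ) = (1−γ)·∑_s μ(s) V_γ(s)`.
If there is a `T` with `P^t d_b = P^t μ` for all `t ≥ T` (as holds for
irreducible aperiodic chains by uniqueness of the stationary distribution),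
then `J_{d_b}(γ) − J_μ(γ) → 0` as `γ → 1⁻`. -/
theorem stmt_3 {S : Type*} [Fintype S] [Nonempty S] [DecidableEq S]
    (P : Matrix S S ℝ)
    (hP_nonneg : ∀ s' s, 0 ≤ P s' s)
    (hP_col : ∀ s, ∑ s', P s' s = 1)
    (r : S → ℝ) (hr : ∀ s, 0 ≤ r s ∧ r s ≤ 1)
    (db μ : S → ℝ)
    (hdb_nonneg : ∀ s, 0 ≤ db s) (hdb_sum : ∑ s, db s = 1)
    (hμ_nonneg : ∀ s, 0 ≤ μ s) (hμ_sum : ∑ s, μ s = 1)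
    (hT : ∃ T : ℕ, ∀ t, T ≤ t → (P ^ t) *ᵥ db = (P ^ t) *ᵥ μ) :
    Tendsto (fun γ : ℝ =>
        (1 - γ) * (∑ s, db s * (∑' t : ℕ, γ ^ t • ((P ^ t)ᵀ *ᵥ r)) s) -
        (1 - γ) * (∑ s, μ s * (∑' t : ℕ, γ ^ t • ((P ^ t)ᵀ *ᵥ r)) s))
      (nhdsWithin 1 (Set.Ico (0 : ℝ) 1)) (nhds 0) :=
  stmt_3_general P hP_nonneg hP_col r db μ hT
end

section
/- Let S be a finite nonempty set, P a column-stochastic matrix indexed by S, γ ∈ [0,1), and let d_b and μ be probability vectors on S. Define the normalized emphatic weight vector m := (1−γ)·(I − γP)⁻¹ d_b and the normalized discounted visitation vector d := (1−γ)·(I − γP)⁻¹ μ. Then ∑_s |m(s) − d(s)| ≤ 2·|S|^{3/2}·d_TV(d_b, μ), where d_TV(d_b, μ) := (1/2)·∑_s |d_b(s) − μ(s)| is the total variation distance. -/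
open Matrix Filter Topology

lemma l1_contract {S : Type*} [Fintype S]
    (P : Matrix S S ℝ)
    (hP_nonneg : ∀ s' s, 0 ≤ P s' s)
    (hP_col : ∀ s, ∑ s', P s' s = 1)
    (x : S → ℝ) : ∑ s, |(P *ᵥ x) s| ≤ ∑ s, |x s| := by
  calc ∑ s, |(P *ᵥ x) s| ≤ ∑ s, ∑ t, P s t * |x t| := by
        apply Finset.sum_le_sum
        intro s _
        calc |(P *ᵥ x) s| ≤ ∑ t, |P s t * x t| := Finset.abs_sum_le_sum_abs _ _
          _ = ∑ t, P s t * |x t| := by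
            refine Finset.sum_congr rfl fun t _ => ?_
            rw [abs_mul, abs_of_nonneg (hP_nonneg s t)]
    _ = ∑ t, (∑ s, P s t) * |x t| := by
        rw [Finset.sum_comm]; simp [Finset.sum_mul]
    _ = ∑ t, |x t| := by simp [hP_col]

/-- core ℓ¹ estimate in Theorem 2 of the paper: For a
finite-state column-stochastic matrix `P`, `γ ∈ [0,1)`, and probability
vectors `d_b` and `μ`, the normalized emphatic weights
`m = (1−γ)·(I − γP)⁻¹ d_b` and normalized discounted visitation
`d = (1−γ)·(I − γP)⁻¹ μ` satisfy
`∑_s |m(s) − d(s)| ≤ 2·|S|^{3/2}·d_TV(d_b, μ)`. -/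
theorem stmt_6 {S : Type*} [Fintype S] [Nonempty S] [DecidableEq S]
    (P : Matrix S S ℝ)
    (hP_nonneg : ∀ s' s, 0 ≤ P s' s)
    (hP_col : ∀ s, ∑ s', P s' s = 1)
    (γ : ℝ) (hγ : γ ∈ Set.Ico (0 : ℝ) 1)
    (db μ : S → ℝ)
    (hdb_nonneg : ∀ s, 0 ≤ db s) (hdb_sum : ∑ s, db s = 1)
    (hμ_nonneg : ∀ s, 0 ≤ μ s) (hμ_sum : ∑ s, μ s = 1) :
    ∑ s, |((1 - γ) • ((1 - γ • P)⁻¹ *ᵥ db)) s -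
          ((1 - γ) • ((1 - γ • P)⁻¹ *ᵥ μ)) s| ≤
      2 * (Fintype.card S : ℝ) ^ ((3 : ℝ) / 2) *
        ((1 / 2) * ∑ s, |db s - μ s|) := by
  obtain ⟨hγ0, hγ1⟩ := hγ
  set A : Matrix S S ℝ := 1 - γ • P with hA
  -- A is invertible
  have key : ∀ z : S → ℝ, A *ᵥ z = 0 → z = 0 := by
    intro z hz
    have hz' : z = γ • (P *ᵥ z) := by
      have h1 : z - γ • (P *ᵥ z) = 0 := by
        simpa [hA, Matrix.sub_mulVec, Matrix.smul_mulVec] using hz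
      have := sub_eq_zero.mp h1
      exact this
    have hsum : ∑ s, |z s| ≤ γ * ∑ s, |z s| := by
      calc ∑ s, |z s| = ∑ s, γ * |(P *ᵥ z) s| := by
            refine Finset.sum_congr rfl fun s _ => ?_
            conv_lhs => rw [hz']
            simp [abs_mul, abs_of_nonneg hγ0]
        _ = γ * ∑ s, |(P *ᵥ z) s| := by rw [Finset.mul_sum]
        _ ≤ γ * ∑ s, |z s| := by
            apply mul_le_mul_of_nonneg_left (l1_contract P hP_nonneg hP_col z) hγ0
    have hnn : 0 ≤ ∑ s, |z s| := Finset.sum_nonneg fun s _ => abs_nonneg _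
    have hzero : ∑ s, |z s| = 0 := by nlinarith
    funext s
    have := (Finset.sum_eq_zero_iff_of_nonneg (fun s _ => abs_nonneg (z s))).mp hzero s
      (Finset.mem_univ s)
    simpa [abs_eq_zero] using this
  have hAunit : IsUnit A := by
    rw [← Matrix.mulVec_injective_iff_isUnit]
    intro x y hxy
    have : A *ᵥ (x - y) = 0 := by rw [Matrix.mulVec_sub, hxy, sub_self]
    have := key _ this
    exact sub_eq_zero.mp this
  set v : S → ℝ := fun s => db s - μ s with hv
  set y : S → ℝ := A⁻¹ *ᵥ v with hy
  have hAy : A *ᵥ y = v := by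
    rw [hy, Matrix.mulVec_mulVec, Matrix.mul_nonsing_inv A
      ((Matrix.isUnit_iff_isUnit_det A).mp hAunit), Matrix.one_mulVec]
  have hydecomp : y = v + γ • (P *ᵥ y) := by
    have h1 : y - γ • (P *ᵥ y) = v := by
      simpa [hA, Matrix.sub_mulVec, Matrix.smul_mulVec] using hAy
    have := sub_eq_iff_eq_add.mp h1
    exact this
  have hybound : (1 - γ) * ∑ s, |y s| ≤ ∑ s, |v s| := by
    have : ∑ s, |y s| ≤ ∑ s, |v s| + γ * ∑ s, |y s| := by
      calc ∑ s, |y s| ≤ ∑ s, (|v s| + γ * |(P *ᵥ y) s|) := by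
            refine Finset.sum_le_sum fun s _ => ?_
            conv_lhs => rw [hydecomp]
            calc |(v + γ • (P *ᵥ y)) s| ≤ |v s| + |γ • (P *ᵥ y) s| := by
                  simpa using abs_add_le (v s) (γ • (P *ᵥ y) s)
              _ = |v s| + γ * |(P *ᵥ y) s| := by
                  simp [abs_mul, abs_of_nonneg hγ0]
        _ = ∑ s, |v s| + γ * ∑ s, |(P *ᵥ y) s| := by
            rw [Finset.sum_add_distrib, Finset.mul_sum]
        _ ≤ ∑ s, |v s| + γ * ∑ s, |y s| := by
            have := l1_contract P hP_nonneg hP_col y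
            nlinarith
    linarith
  have hLHS : ∑ s, |((1 - γ) • (A⁻¹ *ᵥ db)) s - ((1 - γ) • (A⁻¹ *ᵥ μ)) s|
      = (1 - γ) * ∑ s, |y s| := by
    rw [Finset.mul_sum]
    refine Finset.sum_congr rfl fun s _ => ?_
    have hys : y s = (A⁻¹ *ᵥ db) s - (A⁻¹ *ᵥ μ) s := by
      rw [hy, hv]
      have : (fun s => db s - μ s) = db - μ := rfl
      rw [this, Matrix.mulVec_sub]
      simp
    rw [hys]
    simp only [Pi.smul_apply, smul_eq_mul]
    rw [← mul_sub, abs_mul, abs_of_nonneg (by linarith : (0:ℝ) ≤ 1 - γ)]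
  have hcard : (1:ℝ) ≤ (Fintype.card S : ℝ) ^ ((3 : ℝ) / 2) := by
    apply Real.one_le_rpow
    · exact_mod_cast Fintype.card_pos
    · norm_num
  have hvnn : 0 ≤ ∑ s, |v s| := Finset.sum_nonneg fun s _ => abs_nonneg _
  calc ∑ s, |((1 - γ) • (A⁻¹ *ᵥ db)) s - ((1 - γ) • (A⁻¹ *ᵥ μ)) s|
      = (1 - γ) * ∑ s, |y s| := hLHS
    _ ≤ ∑ s, |v s| := hybound
    _ ≤ (Fintype.card S : ℝ) ^ ((3 : ℝ) / 2) * ∑ s, |v s| :=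
        le_mul_of_one_le_left hvnn hcard
    _ = 2 * (Fintype.card S : ℝ) ^ ((3 : ℝ) / 2) * ((1 / 2) * ∑ s, |db s - μ s|) := by
        rw [hv]; ring
end

section
/- Let S be a finite nonempty set, P a column-stochastic matrix indexed by S, γ ∈ [0,1), and let d_b and μ be probability vectors on S. Suppose there is a natural number T such that P^t d_b = P^t μ for all t ≥ T. Define m := (1−γ)·(I − γP)⁻¹ d_b and d := (1−γ)·(I − γP)⁻¹ μ. Then ∑_s |m(s) − d(s)| ≤ (1−γ)·2·T·|S|^{3/2}·d_TV(d_b, μ), where d_TV(d_b, μ) := (1/2)·∑_s |d_b(s) − μ(s)| is the total variation distance. -/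
open Matrix Filter Topology

/-- core ℓ¹ estimate in Theorem 3 of the paper: For a
finite-state column-stochastic matrix `P`, `γ ∈ [0,1)`, and probability
vectors `d_b` and `μ` with `P^t d_b = P^t μ` for all `t ≥ T`, the normalized
emphatic weights `m = (1−γ)·(I − γP)⁻¹ d_b` and normalized visitation
`d = (1−γ)·(I − γP)⁻¹ μ` satisfy
`∑_s |m(s) − d(s)| ≤ (1−γ)·2·T·|S|^{3/2}·d_TV(d_b, μ)`. -/
theorem stmt_8 {S : Type*} [Fintype S] [Nonempty S] [DecidableEq S]
    (P : Matrix S S ℝ)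
    (hP_nonneg : ∀ s' s, 0 ≤ P s' s)
    (hP_col : ∀ s, ∑ s', P s' s = 1)
    (γ : ℝ) (hγ : γ ∈ Set.Ico (0 : ℝ) 1)
    (db μ : S → ℝ)
    (hdb_nonneg : ∀ s, 0 ≤ db s) (hdb_sum : ∑ s, db s = 1)
    (hμ_nonneg : ∀ s, 0 ≤ μ s) (hμ_sum : ∑ s, μ s = 1)
    (T : ℕ)
    (hT : ∀ t, T ≤ t → (P ^ t) *ᵥ db = (P ^ t) *ᵥ μ) :
    ∑ s, |((1 - γ) • ((1 - γ • P)⁻¹ *ᵥ db)) s -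
          ((1 - γ) • ((1 - γ • P)⁻¹ *ᵥ μ)) s| ≤
      (1 - γ) * 2 * (T : ℝ) * (Fintype.card S : ℝ) ^ ((3 : ℝ) / 2) *
        ((1 / 2) * ∑ s, |db s - μ s|) := by
  obtain ⟨hγ0, hγ1⟩ := hγ
  set A : Matrix S S ℝ := 1 - γ • P with hA
  set v : S → ℝ := db - μ with hv
  -- ℓ¹ contraction of P
  have l1 : ∀ x : S → ℝ, ∑ s, |(P *ᵥ x) s| ≤ ∑ s, |x s| := by
    intro x
    calc ∑ s', |(P *ᵥ x) s'| ≤ ∑ s', ∑ s, P s' s * |x s| := by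
          refine Finset.sum_le_sum fun s' _ => ?_
          simp only [mulVec, dotProduct]
          refine (Finset.abs_sum_le_sum_abs _ _).trans ?_
          refine Finset.sum_le_sum fun s _ => ?_
          rw [abs_mul, abs_of_nonneg (hP_nonneg s' s)]
      _ = ∑ s, |x s| := by
          rw [Finset.sum_comm]
          refine Finset.sum_congr rfl fun s _ => ?_
          rw [← Finset.sum_mul, hP_col, one_mul]
  have l1pow : ∀ (t : ℕ) (x : S → ℝ), ∑ s, |((P ^ t) *ᵥ x) s| ≤ ∑ s, |x s| := by
    intro t
    induction t with
    | zero => intro x; simp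
    | succ n ih =>
        intro x
        have h1 : (P ^ (n + 1)) *ᵥ x = (P ^ n) *ᵥ (P *ᵥ x) := by
          rw [Matrix.mulVec_mulVec, ← pow_succ]
        rw [h1]
        exact (ih (P *ᵥ x)).trans (l1 x)
  -- invertibility of A
  have hdet : IsUnit A.det := by
    rw [isUnit_iff_ne_zero]
    intro h0
    obtain ⟨w, hw0, hw⟩ := Matrix.exists_mulVec_eq_zero_iff.mpr h0
    have hwv : w = γ • (P *ᵥ w) := by
      have h2 : w - γ • (P *ᵥ w) = 0 := by
        simpa [hA, Matrix.sub_mulVec, Matrix.smul_mulVec] using hw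
      exact sub_eq_zero.mp h2
    have hpos : 0 < ∑ s, |w s| := by
      obtain ⟨s0, hs0⟩ := Function.ne_iff.mp hw0
      refine Finset.sum_pos' (fun s _ => abs_nonneg _) ⟨s0, Finset.mem_univ _, ?_⟩
      simpa [abs_pos] using hs0
    have hle : ∑ s, |w s| ≤ γ * ∑ s, |w s| := by
      calc ∑ s, |w s| = ∑ s, |(γ • (P *ᵥ w)) s| := by rw [← hwv]
        _ = γ * ∑ s, |(P *ᵥ w) s| := by
            simp [abs_mul, abs_of_nonneg hγ0, Finset.mul_sum]
        _ ≤ γ * ∑ s, |w s| := by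
            exact mul_le_mul_of_nonneg_left (l1 w) hγ0
    nlinarith
  have hAinv : A⁻¹ * A = 1 := Matrix.nonsing_inv_mul A hdet
  -- finite Neumann identity
  set B : Matrix S S ℝ := ∑ t ∈ Finset.range T, γ ^ t • P ^ t with hB
  have key : A * B = 1 - γ ^ T • P ^ T := by
    have h3 : A * B = ∑ t ∈ Finset.range T, (γ ^ t • P ^ t - γ ^ (t+1) • P ^ (t+1)) := by
      rw [hB, Finset.mul_sum]
      refine Finset.sum_congr rfl fun t _ => ?_
      rw [hA, sub_mul, one_mul, smul_mul_assoc, Matrix.mul_smul, smul_smul, ← pow_succ',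
        ← pow_succ']
    rw [h3, Finset.sum_range_sub' (fun t => γ ^ t • P ^ t)]
    simp
  have hvT : (P ^ T) *ᵥ v = 0 := by
    rw [hv, Matrix.mulVec_sub, hT T le_rfl, sub_self]
  have hBinv : B = A⁻¹ * (1 - γ ^ T • P ^ T) := by
    rw [← key, ← Matrix.mul_assoc, hAinv, Matrix.one_mul]
  have hAv : A⁻¹ *ᵥ v = B *ᵥ v := by
    rw [hBinv, ← Matrix.mulVec_mulVec, Matrix.sub_mulVec, Matrix.one_mulVec,
      Matrix.smul_mulVec, hvT, smul_zero, sub_zero]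
  have hBv : B *ᵥ v = ∑ t ∈ Finset.range T, γ ^ t • ((P ^ t) *ᵥ v) := by
    rw [hB]
    funext s
    simp only [Matrix.mulVec, dotProduct, Finset.sum_apply, Matrix.sum_apply,
      Finset.sum_mul, Pi.smul_apply, Matrix.smul_apply, smul_eq_mul, Finset.mul_sum]
    rw [Finset.sum_comm]
    exact Finset.sum_congr rfl fun t _ => Finset.sum_congr rfl fun s' _ => by ring
  -- rewrite LHS
  have hLHS : ∑ s, |((1 - γ) • (A⁻¹ *ᵥ db)) s - ((1 - γ) • (A⁻¹ *ᵥ μ)) s|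
      = (1 - γ) * ∑ s, |(B *ᵥ v) s| := by
    rw [Finset.mul_sum]
    refine Finset.sum_congr rfl fun s _ => ?_
    rw [← hAv]
    have : (A⁻¹ *ᵥ v) s = (A⁻¹ *ᵥ db) s - (A⁻¹ *ᵥ μ) s := by
      rw [hv, Matrix.mulVec_sub]; rfl
    rw [Pi.smul_apply, Pi.smul_apply, smul_eq_mul, smul_eq_mul, ← mul_sub, abs_mul,
      abs_of_nonneg (by linarith : (0:ℝ) ≤ 1 - γ), this]
  have hbound : ∑ s, |(B *ᵥ v) s| ≤ (T : ℝ) * ∑ s, |v s| := by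
    rw [hBv]
    calc ∑ s, |(∑ t ∈ Finset.range T, γ ^ t • ((P ^ t) *ᵥ v)) s|
        ≤ ∑ t ∈ Finset.range T, ∑ s, |(γ ^ t • ((P ^ t) *ᵥ v)) s| := by
          rw [← Finset.sum_comm]
          refine Finset.sum_le_sum fun s _ => ?_
          simpa using Finset.abs_sum_le_sum_abs (fun t => (γ ^ t • ((P ^ t) *ᵥ v)) s) (Finset.range T)
      _ ≤ ∑ t ∈ Finset.range T, ∑ s, |v s| := by
          refine Finset.sum_le_sum fun t _ => ?_
          have hγt : γ ^ t ≤ 1 := pow_le_one₀ hγ0 hγ1.le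
          have hγt0 : 0 ≤ γ ^ t := pow_nonneg hγ0 t
          calc ∑ s, |(γ ^ t • ((P ^ t) *ᵥ v)) s|
              = γ ^ t * ∑ s, |((P ^ t) *ᵥ v) s| := by
                simp [abs_mul, abs_of_nonneg hγt0, Finset.mul_sum]
            _ ≤ 1 * ∑ s, |v s| := by
                refine mul_le_mul hγt (l1pow t v) ?_ zero_le_one
                exact Finset.sum_nonneg fun s _ => abs_nonneg _
            _ = ∑ s, |v s| := one_mul _
      _ = (T : ℝ) * ∑ s, |v s| := by simp [Finset.sum_const, nsmul_eq_mul]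
  have hcard : (1:ℝ) ≤ (Fintype.card S : ℝ) ^ ((3:ℝ)/2) := by
    refine Real.one_le_rpow ?_ (by norm_num)
    exact_mod_cast Fintype.card_pos
  have hvnn : 0 ≤ ∑ s, |v s| := Finset.sum_nonneg fun s _ => abs_nonneg _
  have hfinal : (1 - γ) * ((T : ℝ) * ∑ s, |v s|)
      ≤ (1 - γ) * 2 * (T : ℝ) * (Fintype.card S : ℝ) ^ ((3:ℝ)/2) * ((1/2) * ∑ s, |v s|) := by
    have h1γ : (0:ℝ) ≤ 1 - γ := by linarith
    nlinarith [mul_nonneg (mul_nonneg h1γ (Nat.cast_nonneg T)) hvnn]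
  have hveq : ∀ s, v s = db s - μ s := fun s => rfl
  calc ∑ s, |((1 - γ) • (A⁻¹ *ᵥ db)) s - ((1 - γ) • (A⁻¹ *ᵥ μ)) s|
      = (1 - γ) * ∑ s, |(B *ᵥ v) s| := hLHS
    _ ≤ (1 - γ) * ((T : ℝ) * ∑ s, |v s|) := by
        refine mul_le_mul_of_nonneg_left hbound (by linarith)
    _ ≤ (1 - γ) * 2 * (T : ℝ) * (Fintype.card S : ℝ) ^ ((3:ℝ)/2) * ((1/2) * ∑ s, |v s|) := hfinal
    _ = (1 - γ) * 2 * (T : ℝ) * (Fintype.card S : ℝ) ^ ((3:ℝ)/2) * ((1/2) * ∑ s, |db s - μ s|) := by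
        simp only [hveq]
end
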